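/- arXiv:1905.03835 — 4 statements merged into one kernel-verified Lean document; each statement's English description precedes it below -/
import Mathlib

section
/- Let r ∈ (0,1), τ ∈ [0,1], and let K > (τ·r² + r·(1−r))/(τ·(1−r)² + r·(1−r)). Then for every finite set {s₁, …, sₙ} of positive reals, there exist γ, β ∈ (0,1) such that for every s ∈ {s₁, …, sₙ}: (1 + β·r·s·(τ + (1−τ)·r))^{−1/(r·s)} ≤ γ ≤ (1 − β·r·s·(1 − (1−τ)·r))^{1/(K·(1−r)·s)}, where in particular 1 − β·r·s·(1 − (1−τ)·r) > 0. -/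
set_option maxHeartbeats 1000000 in
theorem normalization_parameters_exist (r τ K : ℝ)
    (hr0 : 0 < r) (hr1 : r < 1) (hτ0 : 0 ≤ τ) (hτ1 : τ ≤ 1)
    (hK : (τ * r ^ 2 + r * (1 - r)) / (τ * (1 - r) ^ 2 + r * (1 - r)) < K)
    (S : Finset ℝ) (hS : ∀ s ∈ S, 0 < s) :
    ∃ γ β : ℝ, 0 < γ ∧ γ < 1 ∧ 0 < β ∧ β < 1 ∧
      ∀ s ∈ S,
        0 < 1 - β * r * s * (1 - (1 - τ) * r) ∧
        (1 + β * r * s * (τ + (1 - τ) * r)) ^ (-1 / (r * s)) ≤ γ ∧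
        γ ≤ (1 - β * r * s * (1 - (1 - τ) * r)) ^ (1 / (K * (1 - r) * s)) := by
  obtain ⟨M0, hM0⟩ := S.exists_le
  set A := 1 - (1 - τ) * r with hAdef
  set B := τ + (1 - τ) * r with hBdef
  have h1r : 0 < 1 - r := by linarith
  have hA : 0 < A := by rw [hAdef]; nlinarith [mul_nonneg hτ0 hr0.le]
  have hB : 0 < B := by rw [hBdef]; nlinarith [mul_nonneg hτ0 h1r.le]
  clear_value A B
  set M := max M0 1 with hMdef
  have hM : 0 < M := lt_of_lt_of_le one_pos (le_max_right _ _)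
  have hMs : ∀ s ∈ S, s ≤ M := fun s hs => (hM0 s hs).trans (le_max_left _ _)
  clear_value M
  have hden : 0 < τ * (1 - r) ^ 2 + r * (1 - r) := by
    nlinarith [mul_nonneg hτ0 (sq_nonneg (1 - r)), mul_pos hr0 h1r]
  have hnum : 0 ≤ τ * r ^ 2 + r * (1 - r) := by
    nlinarith [mul_nonneg hτ0 (sq_nonneg r), mul_pos hr0 h1r]
  have hK0 : 0 < K := lt_of_le_of_lt (div_nonneg hnum hden.le) hK
  have hK' : r * A < K * (1 - r) * B := by
    have h := (div_lt_iff₀ hden).mp hK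
    rw [hAdef, hBdef]; nlinarith [h]
  set δ := K * (1 - r) * B - r * A with hδdef
  have hδ : 0 < δ := by rw [hδdef]; linarith
  clear_value δ
  have hKr : 0 < K * (1 - r) + r := by
    have := mul_pos hK0 h1r; linarith
  have hDpos : 0 < r * M * A * B * (K * (1 - r) + r) :=
    mul_pos (mul_pos (mul_pos (mul_pos hr0 hM) hA) hB) hKr
  have hrMA : 0 < r * M * A := mul_pos (mul_pos hr0 hM) hA
  set β := min (1/2) (min (δ / (2 * (r * M * A * B * (K * (1 - r) + r))))
      (1 / (2 * (r * M * A)))) with hβdef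
  have hβ0 : 0 < β := by
    apply lt_min (by norm_num)
    exact lt_min (div_pos hδ (by linarith)) (div_pos one_pos (by linarith))
  have hβhalf : β ≤ 1/2 := min_le_left _ _
  have hβ1 : β < 1 := by linarith
  have hβ2 : β * (2 * (r * M * A * B * (K * (1 - r) + r))) ≤ δ := by
    have h := (min_le_right (1/2 : ℝ) _).trans
      (min_le_left (δ / (2 * (r * M * A * B * (K * (1 - r) + r)))) (1 / (2 * (r * M * A))))
    exact (le_div_iff₀ (by linarith)).mp h
  have hβ3 : β * (2 * (r * M * A)) ≤ 1 := by
    have h := (min_le_right (1/2 : ℝ) _).trans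
      (min_le_right (δ / (2 * (r * M * A * B * (K * (1 - r) + r)))) (1 / (2 * (r * M * A))))
    exact (le_div_iff₀ (by linarith)).mp h
  clear_value β
  have hβMA : β * (r * M * A) ≤ 1/2 := by nlinarith
  have hkey : r * A * (1 + β * (r * M * B)) < K * (1 - r) * B * (1 - β * (r * M * A)) := by
    have hδeq : δ = K * (1 - r) * B - r * A := hδdef
    nlinarith [hβ2, hδ]
  have hE0 : 0 < 1 - β * (r * M * A) := by linarith
  set E := (1 - β * (r * M * A)) * (K * (1 - r)) with hEdef
  have hEpos : 0 < E := mul_pos hE0 (mul_pos hK0 h1r)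
  set c := -(r * A) / E with hcdef
  clear_value E c
  have hc0 : c < 0 := by
    rw [hcdef]
    exact div_neg_of_neg_of_pos (by linarith [mul_pos hr0 hA]) hEpos
  refine ⟨Real.exp (β * c), β, Real.exp_pos _, ?_, hβ0, hβ1, ?_⟩
  · have : β * c < 0 := mul_neg_of_pos_of_neg hβ0 hc0
    calc Real.exp (β * c) < Real.exp 0 := Real.exp_lt_exp.mpr this
      _ = 1 := Real.exp_zero
  intro s hs
  have hs0 := hS s hs
  have hsM := hMs s hs
  have hrs : 0 < r * s := mul_pos hr0 hs0
  have hβrA : (0:ℝ) ≤ β * r * A := le_of_lt (mul_pos (mul_pos hβ0 hr0) hA)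
  have hβrB : (0:ℝ) ≤ β * r * B := le_of_lt (mul_pos (mul_pos hβ0 hr0) hB)
  have hxs : β * r * s * A ≤ β * (r * M * A) := by
    calc β * r * s * A = β * r * A * s := by ring
      _ ≤ β * r * A * M := mul_le_mul_of_nonneg_left hsM hβrA
      _ = β * (r * M * A) := by ring
  have hx0 : 0 < β * r * s * A := mul_pos (mul_pos (mul_pos hβ0 hr0) hs0) hA
  have ha : 0 < 1 - β * r * s * A := by linarith
  have hys : β * r * s * B ≤ β * (r * M * B) := by
    calc β * r * s * B = β * r * B * s := by ring
      _ ≤ β * r * B * M := mul_le_mul_of_nonneg_left hsM hβrB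
      _ = β * (r * M * B) := by ring
  have hy0 : 0 < β * r * s * B := mul_pos (mul_pos (mul_pos hβ0 hr0) hs0) hB
  have hy1 : 0 < 1 + β * r * s * B := by linarith
  refine ⟨ha, ?_, ?_⟩
  · -- lower bound on γ
    rw [Real.rpow_def_of_pos hy1, Real.exp_le_exp]
    have hlog : (β * r * s * B) / (1 + β * r * s * B) ≤ Real.log (1 + β * r * s * B) := by
      have h1 := Real.log_le_sub_one_of_pos (show (0:ℝ) < (1 + β * r * s * B)⁻¹ by positivity)
      rw [Real.log_inv] at h1
      have h2 : (1 + β * r * s * B)⁻¹ - 1 = -((β * r * s * B) / (1 + β * r * s * B)) := by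
        field_simp
        ring
      rw [h2] at h1; linarith
    have hmain : -(β * c * (r * s)) ≤ (β * r * s * B) / (1 + β * r * s * B) := by
      have heq : -(β * c * (r * s)) = (β * r * s * (r * A)) / E := by
        rw [hcdef]; ring
      rw [heq, div_le_div_iff₀ hEpos hy1]
      have h4 : r * A * (1 + β * r * s * B) ≤ K * (1 - r) * B * (1 - β * (r * M * A)) := by
        nlinarith [hkey, mul_pos hr0 hA]
      have hβrs : (0:ℝ) ≤ β * r * s := le_of_lt (mul_pos (mul_pos hβ0 hr0) hs0)
      calc β * r * s * (r * A) * (1 + β * r * s * B)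
          = (β * r * s) * (r * A * (1 + β * r * s * B)) := by ring
        _ ≤ (β * r * s) * (K * (1 - r) * B * (1 - β * (r * M * A))) :=
            mul_le_mul_of_nonneg_left h4 hβrs
        _ = (β * r * s * B) * E := by rw [hEdef]; ring
    have h5 : -(β * c * (r * s)) ≤ Real.log (1 + β * r * s * B) := hmain.trans hlog
    rw [show Real.log (1 + β * r * s * B) * (-1 / (r * s))
        = -(Real.log (1 + β * r * s * B)) / (r * s) by ring, div_le_iff₀ hrs]
    linarith
  · -- upper bound on γ
    rw [Real.rpow_def_of_pos ha, Real.exp_le_exp]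
    have hKs : 0 < K * (1 - r) * s := mul_pos (mul_pos hK0 h1r) hs0
    have hlog2 : -((β * r * s * A) / (1 - β * r * s * A)) ≤ Real.log (1 - β * r * s * A) := by
      have h1 := Real.log_le_sub_one_of_pos (show (0:ℝ) < (1 - β * r * s * A)⁻¹ by positivity)
      rw [Real.log_inv] at h1
      have h2 : (1 - β * r * s * A)⁻¹ - 1 = (β * r * s * A) / (1 - β * r * s * A) := by
        field_simp
        ring
      rw [h2] at h1; linarith
    have hmono : (β * r * s * A) / (1 - β * r * s * A)
        ≤ (β * r * s * A) / (1 - β * (r * M * A)) := by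
      rw [div_le_div_iff₀ ha hE0]
      nlinarith [hxs, hx0]
    have heq2 : β * c * (K * (1 - r) * s) = -((β * r * s * A) / (1 - β * (r * M * A))) := by
      rw [hcdef, hEdef]
      field_simp
    have h6 : β * c * (K * (1 - r) * s) ≤ Real.log (1 - β * r * s * A) := by
      rw [heq2]; linarith
    rw [show Real.log (1 - β * r * s * A) * (1 / (K * (1 - r) * s))
        = Real.log (1 - β * r * s * A) / (K * (1 - r) * s) by ring, le_div_iff₀ hKs]
    exact h6
end

section
/- Let r ∈ (0,1), τ ∈ [0,1], γ ∈ (0,1), β ∈ (0,1), and s > 0. Suppose γ^{s·r} ≥ 1/(1 + s·r·β·(τ + (1−τ)·r)). Define r_x = γ^{x−1} + (1 − γ^{x−1})·r and β_x = β·γ^{x−1}. Then for every real x with 1 ≤ x < 1 + r·s, we have 1 − r_x < s·r·(1−r)·β_x. -/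
theorem min_cannot_cross_boundary (r τ γ β s : ℝ)
    (hr0 : 0 < r) (hr1 : r < 1) (hτ0 : 0 ≤ τ) (hτ1 : τ ≤ 1)
    (hγ0 : 0 < γ) (hγ1 : γ < 1) (hβ0 : 0 < β) (hβ1 : β < 1) (hs : 0 < s)
    (hγs : 1 / (1 + s * r * β * (τ + (1 - τ) * r)) ≤ γ ^ (s * r)) :
    ∀ x : ℝ, 1 ≤ x → x < 1 + r * s →
      1 - (γ ^ (x - 1) + (1 - γ ^ (x - 1)) * r)
        < s * r * (1 - r) * (β * γ ^ (x - 1)) := by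
  intro x hx1 hx2
  set g := γ ^ (x - 1) with hgdef
  have hexp : x - 1 < s * r := by nlinarith [mul_comm r s]
  have hg : γ ^ (s * r) < g :=
    Real.rpow_lt_rpow_of_exponent_gt hγ0 hγ1 hexp
  have hk1 : τ + (1 - τ) * r ≤ 1 := by nlinarith
  have hk0 : 0 < τ + (1 - τ) * r := by nlinarith
  have hd0 : 0 < 1 + s * r * β * (τ + (1 - τ) * r) := by positivity
  have hd0' : 0 < 1 + s * r * β := by positivity
  have hmono : 1 / (1 + s * r * β) ≤ 1 / (1 + s * r * β * (τ + (1 - τ) * r)) := by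
    apply one_div_le_one_div_of_le hd0
    nlinarith [mul_pos (mul_pos hs hr0) hβ0]
  have hgbig : 1 / (1 + s * r * β) < g := lt_of_le_of_lt (hmono.trans hγs) hg
  have hkey : 1 < g * (1 + s * r * β) := by
    rw [div_lt_iff₀ hd0'] at hgbig
    linarith
  nlinarith
end

section
/- Let r ∈ (0,1), τ ∈ [0,1], x ≥ 1, s ≥ 0, K > 0, and let r_y ∈ [0,1] for y ≥ 1 be a family of ratios with r_y ≥ r for all y. Let b = β_x·s·r·(1−r) with β_x ≥ 0. If r_{x−r·s} − r_x ≤ r·(1−r)·β_x·s·(τ + (1−τ)·r) then (r_x + τ·b)/(1 − (1−τ)·b) ≥ r_{x−r·s}; and if r_x − r_{x+K·(1−r)·s} ≥ r·(1−r)·β_x·s·(1 − (1−τ)·r) then (r_x − b)/(1 − (1−τ)·b) ≥ r_{x+K·(1−r)·s}; assuming in both cases 0 ≤ (1−τ)·b < 1. -/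
theorem linear_ineq_implies_budget_invariant (r τ x s K βx : ℝ) (rr : ℝ → ℝ)
    (hr0 : 0 < r) (hr1 : r < 1) (hτ0 : 0 ≤ τ) (hτ1 : τ ≤ 1)
    (hx : 1 ≤ x) (hs : 0 ≤ s) (hK : 0 < K) (hβx : 0 ≤ βx)
    (hrr : ∀ y : ℝ, 1 ≤ y → r ≤ rr y ∧ 0 ≤ rr y ∧ rr y ≤ 1)
    (hb0 : 0 ≤ (1 - τ) * (βx * s * r * (1 - r)))
    (hb1 : (1 - τ) * (βx * s * r * (1 - r)) < 1) :
    (rr (x - r * s) - rr x ≤ r * (1 - r) * βx * s * (τ + (1 - τ) * r) →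
      (rr x + τ * (βx * s * r * (1 - r))) / (1 - (1 - τ) * (βx * s * r * (1 - r)))
        ≥ rr (x - r * s)) ∧
    (rr x - rr (x + K * (1 - r) * s) ≥ r * (1 - r) * βx * s * (1 - (1 - τ) * r) →
      (rr x - βx * s * r * (1 - r)) / (1 - (1 - τ) * (βx * s * r * (1 - r)))
        ≥ rr (x + K * (1 - r) * s)) := by
  have hbnn : 0 ≤ βx * s * r * (1 - r) := by nlinarith [mul_nonneg hβx hs, mul_nonneg (mul_nonneg hβx hs) hr0.le]
  have hD : 0 < 1 - (1 - τ) * (βx * s * r * (1 - r)) := by linarith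
  obtain ⟨hrx, hrx0, hrx1⟩ := hrr x hx
  constructor
  · intro h
    rw [ge_iff_le, le_div_iff₀ hD]
    rcases le_or_gt (rr (x - r * s)) r with hc | hc
    · nlinarith [mul_nonneg hτ0 hbnn, mul_pos hr0 hD,
        mul_le_mul_of_nonneg_right hc hD.le]
    · nlinarith [mul_le_mul_of_nonneg_right hc.le hb0]
  · intro h
    have hy : (1 : ℝ) ≤ x + K * (1 - r) * s := by nlinarith [mul_nonneg (mul_nonneg hK.le (by linarith : (0:ℝ) ≤ 1 - r)) hs]
    obtain ⟨hry, hry0, hry1⟩ := hrr _ hy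
    rw [ge_iff_le, le_div_iff₀ hD]
    nlinarith [mul_le_mul_of_nonneg_right hry hb0]
end

section
/- Let V be a finite set, w : V → ℝ, p ∈ (0,1), c ∈ ℝ, and let Pot : V → ℝ, and for each v ∈ V let v⁺, v⁻ ∈ V satisfy Pot(v) = p·Pot(v⁺) + (1−p)·Pot(v⁻) + w(v) − c. Define St(v) = p·(1−p)·(Pot(v⁺) − Pot(v⁻)). Then for every finite sequence v₁, …, vₙ in V such that for each 1 ≤ i < n either v_{i+1} = v_i⁺ (call i a win) or v_{i+1} = v_i⁻ (call i a loss), we have Pot(v₁) − Pot(vₙ) + (n−1)·c ≤ E + G/(1−p) − I/p, where E = Σ_{1≤i<n} w(v_i), I = Σ_{i win} St(v_i), and G = Σ_{i loss} St(v_i). -/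
theorem potential_energy_lemma {V : Type*} [Fintype V] [DecidableEq V]
    (w : V → ℝ) (p c : ℝ) (hp0 : 0 < p) (hp1 : p < 1)
    (Pot : V → ℝ) (plus minus : V → V)
    (hPot : ∀ v : V, Pot v = p * Pot (plus v) + (1 - p) * Pot (minus v) + w v - c)
    (St : V → ℝ) (hSt : ∀ v : V, St v = p * (1 - p) * (Pot (plus v) - Pot (minus v)))
    (n : ℕ) (hn : 1 ≤ n) (v : ℕ → V)
    (hv : ∀ i : ℕ, i + 1 < n → v (i + 1) = plus (v i) ∨ v (i + 1) = minus (v i)) :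
    Pot (v 0) - Pot (v (n - 1)) + ((n : ℝ) - 1) * c
      ≤ (∑ i ∈ Finset.range (n - 1), w (v i))
        + (∑ i ∈ Finset.range (n - 1),
            if v (i + 1) = plus (v i) then 0 else St (v i)) / (1 - p)
        - (∑ i ∈ Finset.range (n - 1),
            if v (i + 1) = plus (v i) then St (v i) else 0) / p := by
  have hp0' : p ≠ 0 := ne_of_gt hp0
  have hp1' : (1 : ℝ) - p ≠ 0 := by linarith
  -- per-step equality
  have step : ∀ i : ℕ, i + 1 < n →
      Pot (v i) - Pot (v (i + 1)) + c
        = w (v i) + (if v (i + 1) = plus (v i) then 0 else St (v i)) / (1 - p)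
            - (if v (i + 1) = plus (v i) then St (v i) else 0) / p := by
    intro i hi
    rcases hv i hi with h | h <;> rw [h]
    · simp only [if_pos rfl, ite_true, hSt, hPot (v i)]; field_simp; ring
    · rcases eq_or_ne (minus (v i)) (plus (v i)) with he | he
      · simp only [if_pos he, ite_true, hSt, he, hPot (v i)]; field_simp; ring
      · simp only [if_neg he, hSt, hPot (v i)]; field_simp; ring
  obtain ⟨m, rfl⟩ : ∃ m, n = m + 1 := ⟨n - 1, (Nat.succ_pred_eq_of_pos hn).symm⟩
  simp only [Nat.add_sub_cancel] at *
  have key : ∀ k : ℕ, k ≤ m →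
      Pot (v 0) - Pot (v k) + (k : ℝ) * c
        = (∑ i ∈ Finset.range k, w (v i))
          + (∑ i ∈ Finset.range k,
              if v (i + 1) = plus (v i) then 0 else St (v i)) / (1 - p)
          - (∑ i ∈ Finset.range k,
              if v (i + 1) = plus (v i) then St (v i) else 0) / p := by
    intro k hk
    induction k with
    | zero => simp
    | succ j ih =>
      have hj : j ≤ m := Nat.le_of_succ_le hk
      have hjn : j + 1 < m + 1 := Nat.succ_lt_succ (Nat.lt_of_succ_le hk)
      have hs := step j hjn
      rw [Finset.sum_range_succ, Finset.sum_range_succ, Finset.sum_range_succ,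
        add_div, add_div]
      have := ih hj
      push_cast
      linarith
  have hfinal := key m le_rfl
  push_cast
  linarith
end
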